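/- Let G = C_n(S) be a circulant graph whose independence complex is shellable, and let m ≥ 1. Then the lexicographical product G[K_m] is isomorphic to a circulant graph on nm vertices whose independence complex is shellable. Likewise, if the independence complex of G is vertex decomposable, then G[K_m] is isomorphic to a circulant graph on nm vertices whose independence complex is vertex decomposable. -/

import Mathlib

open Finset

variable {V : Type*}

/-- A facet of a collection of faces `Δ` is a maximal face. -/
def IsFacet (Δ : Set (Finset V)) (F : Finset V) : Prop :=
  F ∈ Δ ∧ ∀ G ∈ Δ, F ⊆ G → F = G

/-- A complex is pure if all facets have the same cardinality. -/
def IsPure (Δ : Set (Finset V)) : Prop :=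
  ∀ F G, IsFacet Δ F → IsFacet Δ G → F.card = G.card

/-- Deletion of a vertex from a complex. -/
def del (Δ : Set (Finset V)) (x : V) : Set (Finset V) := {F ∈ Δ | x ∉ F}

/-- Link of a vertex in a complex. -/
def link [DecidableEq V] (Δ : Set (Finset V)) (x : V) : Set (Finset V) :=
  {F ∈ Δ | x ∉ F ∧ insert x F ∈ Δ}

/-- `F : Fin s → Finset V` is a shelling order of the facets of `Δ`. -/
def IsShelling [DecidableEq V] (Δ : Set (Finset V)) {s : ℕ} (F : Fin s → Finset V) : Prop :=
  (∀ i, IsFacet Δ (F i)) ∧ (∀ G, IsFacet Δ G → ∃ i, F i = G) ∧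
  Function.Injective F ∧
  (∀ i j : Fin s, j < i → ∃ x ∈ F i \ F j, ∃ k, k < i ∧ F i \ F k = {x})

/-- A complex is shellable if it is pure and admits a shelling order of its facets. -/
def Shellable [DecidableEq V] (Δ : Set (Finset V)) : Prop :=
  IsPure Δ ∧ ∃ (s : ℕ) (F : Fin s → Finset V), IsShelling Δ F

/-- A pure complex is vertex decomposable if it is a simplex (unique facet), or some vertex
has pure, vertex decomposable deletion and link. -/
inductive VertexDecomposable [DecidableEq V] : Set (Finset V) → Prop
  | simplex (Δ : Set (Finset V)) (h : ∃! F, IsFacet Δ F) : VertexDecomposable Δ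
  | step (Δ : Set (Finset V)) (x : V)
      (hdp : IsPure (del Δ x)) (hlp : IsPure (link Δ x))
      (hd : VertexDecomposable (del Δ x)) (hl : VertexDecomposable (link Δ x)) :
      VertexDecomposable Δ

/-- The independence complex of a graph: all independent sets. -/
def indComplex (G : SimpleGraph V) : Set (Finset V) :=
  {F | ∀ v ∈ F, ∀ w ∈ F, ¬ G.Adj v w}

/-- The lexicographical product `G[H]`. -/
def lexProd {α β : Type*} (G : SimpleGraph α) (H : SimpleGraph β) :
    SimpleGraph (α × β) where
  Adj p q := G.Adj p.1 q.1 ∨ (p.1 = q.1 ∧ H.Adj p.2 q.2)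
  symm := by
    constructor
    rintro p q (h | ⟨h1, h2⟩)
    · exact Or.inl h.symm
    · exact Or.inr ⟨h1.symm, h2.symm⟩
  loopless := by
    constructor
    rintro p (h | ⟨_, h⟩)
    · exact G.irrefl h
    · exact H.irrefl h

/-- The independence number of a graph. -/
noncomputable def indepNum (G : SimpleGraph V) : ℕ :=
  sSup {n | ∃ F : Finset V, F ∈ indComplex G ∧ F.card = n}

/-- The expansion of a graph `G`, where vertex `v` is replaced by `s v` copies,
and distinct vertices `(i,j)` and `(k,l)` are adjacent iff `i ~ k` in `G` or `i = k`. -/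
def expansion (G : SimpleGraph V) (s : V → ℕ) : SimpleGraph (Σ v : V, Fin (s v)) where
  Adj p q := p ≠ q ∧ (G.Adj p.1 q.1 ∨ p.1 = q.1)
  symm := by
    constructor
    rintro p q ⟨h1, h2 | h2⟩
    · exact ⟨h1.symm, Or.inl h2.symm⟩
    · exact ⟨h1.symm, Or.inr h2.symm⟩
  loopless := by constructor; rintro p ⟨h, _⟩; exact h rfl

/-- The circulant graph `C_n(S)`: vertices `x_a`, `x_b` are adjacent iff
`|a-b| ∈ S` or `n - |a-b| ∈ S`. -/
def circulant (n : ℕ) (S : Set ℕ) : SimpleGraph (Fin n) where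
  Adj a b := a ≠ b ∧ ((max a.val b.val - min a.val b.val) ∈ S ∨
      (n - (max a.val b.val - min a.val b.val)) ∈ S)
  symm := by
    constructor
    rintro a b ⟨h1, h2⟩
    refine ⟨h1.symm, ?_⟩
    rwa [max_comm, min_comm]
  loopless := by constructor; rintro a ⟨h, _⟩; exact h rfl

/-!
Writing the vertices of `ℤ/nm` as `a + n j` with `a < n` and `j < m`, two of them are adjacent in
`C_nm(S)` exactly when their residues mod `n` are equal or adjacent in `C_n(S₁)`, for the connection
set `S` of differences whose residue mod `n` is `0` or a difference of `C_n(S₁)`; this identifies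
`C_n(S₁)[K_m]` with `C_nm(S)`. Its independent sets are then the sets of vertices with pairwise
distinct residues forming an independent set of `C_n(S₁)`: `Ind(C_nm(S))` is the expansion of
`Ind(C_n(S₁))` in which every vertex is replaced by `m` copies.

Expansion preserves both properties. Facets of the expansion lie over facets of the base; sorting
them first by the shelling position of the facet beneath and then colexicographically gives a
shelling. For vertex decomposability, the copies of a shedding vertex `y` are shed one at a time:
deleting a copy leaves an expansion with one copy fewer (of `del y` once none is left), and the link
of any copy is the expansion of `link y`.
-/

section Complex

variable {Δ : Set (Finset V)} {F₀ : Finset V}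

theorem isFacet_iff_maximal {F : Finset V} : IsFacet Δ F ↔ Maximal (· ∈ Δ) F := by
  refine and_congr_right fun _ => forall₂_congr fun G _ => ?_
  exact ⟨fun h hFG => (h hFG).symm.le, fun h hFG => le_antisymm hFG (h hFG)⟩

theorem exists_isFacet_superset [Finite V] {F : Finset V} (hF : F ∈ Δ) :
    ∃ G, IsFacet Δ G ∧ F ⊆ G := by
  obtain ⟨G, hFG, hG⟩ := Finite.exists_le_maximal (p := (· ∈ Δ)) hF
  exact ⟨G, isFacet_iff_maximal.2 hG, hFG⟩

theorem isFacet_Iic_iff {F : Finset V} : IsFacet (Set.Iic F₀) F ↔ F = F₀ :=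
  ⟨fun h => h.2 F₀ Set.self_mem_Iic h.1,
    by rintro rfl; exact ⟨Set.self_mem_Iic, fun _ hG hFG => le_antisymm hFG hG⟩⟩

theorem isPure_Iic : IsPure (Set.Iic F₀) := fun F G hF hG => by
  rw [isFacet_Iic_iff.1 hF, isFacet_Iic_iff.1 hG]

theorem eq_Iic_of_isFacet_unique [Finite V] (hΔ : IsLowerSet Δ) (hF₀ : IsFacet Δ F₀)
    (huniq : ∀ G, IsFacet Δ G → G = F₀) : Δ = Set.Iic F₀ := by
  ext F
  refine ⟨fun hF => ?_, fun hF => hΔ hF hF₀.1⟩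
  obtain ⟨G, hG, hFG⟩ := exists_isFacet_superset hF
  exact huniq G hG ▸ hFG

theorem isLowerSet_del (hΔ : IsLowerSet Δ) (x : V) : IsLowerSet (del Δ x) :=
  fun _ _ hGF hF => ⟨hΔ hGF hF.1, fun hx => hF.2 (hGF hx)⟩

theorem isLowerSet_link [DecidableEq V] (hΔ : IsLowerSet Δ) (x : V) : IsLowerSet (link Δ x) :=
  fun _ _ hGF hF => ⟨hΔ hGF hF.1, fun hx => hF.2.1 (hGF hx),
    hΔ (insert_subset_insert x hGF) hF.2.2⟩

theorem link_subset_del [DecidableEq V] (x : V) : link Δ x ⊆ del Δ x :=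
  fun _ hF => ⟨hF.1, hF.2.1⟩

theorem del_Iic_insert [DecidableEq V] {y : V} (hy : y ∉ F₀) :
    del (Set.Iic (insert y F₀)) y = Set.Iic F₀ := by
  ext F
  simp only [del, Set.mem_ofPred_eq, Set.mem_Iic]
  exact ⟨fun ⟨h, hyF⟩ => (subset_insert_iff_of_notMem hyF).1 h,
    fun h => ⟨h.trans (subset_insert y F₀), fun hyF => hy (h hyF)⟩⟩

theorem link_Iic_insert [DecidableEq V] {y : V} (hy : y ∉ F₀) :
    link (Set.Iic (insert y F₀)) y = Set.Iic F₀ := by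
  ext F
  simp only [link, Set.mem_ofPred_eq, Set.mem_Iic]
  exact ⟨fun ⟨h, hyF, _⟩ => (subset_insert_iff_of_notMem hyF).1 h,
    fun h => ⟨h.trans (subset_insert y F₀), fun hyF => hy (h hyF),
      insert_subset_insert y h⟩⟩

theorem vertexDecomposable_Iic [DecidableEq V] : VertexDecomposable (Set.Iic F₀) :=
  .simplex _ ⟨F₀, isFacet_Iic_iff.2 rfl, fun _ h => isFacet_Iic_iff.1 h⟩

end Complex

section Expansion

variable {α : Type*} [DecidableEq V] (π : α → V)

/-- The expansion of `Δ` in which each vertex `v` is replaced by its copies in `A ∩ π⁻¹(v)`: a face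
picks at most one copy of each vertex of a face of `Δ`. Restricting the copies to `A` rather than
all of `α` lets them be removed one at a time. -/
def expandComplex (A : Finset α) (Δ : Set (Finset V)) : Set (Finset α) :=
  {F | F ⊆ A ∧ Set.InjOn π F ∧ F.image π ∈ Δ}

def Covers (A : Finset α) (Δ : Set (Finset V)) : Prop :=
  ∀ F ∈ Δ, F ⊆ A.image π

variable {π} {A : Finset α} {Δ Δ' : Set (Finset V)} {y : V}

theorem Covers.mono (h : Covers π A Δ) (hΔ : Δ' ⊆ Δ) : Covers π A Δ' :=
  fun F hF => h F (hΔ hF)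

theorem exists_lift_of_subset_image {G : Finset V} (hG : G ⊆ A.image π) :
    ∃ L ⊆ A, Set.InjOn π L ∧ L.image π = G :=
  exists_subset_injOn_image_eq_of_surjOn _ _
    (by rw [Set.SurjOn, ← coe_image]; exact_mod_cast hG)

theorem Covers.of_del (hΔ : IsLowerSet Δ) (hA : Covers π A (del Δ y)) (hy : ∃ p ∈ A, π p = y) :
    Covers π A Δ := by
  intro F hF v hv
  obtain ⟨p, hpA, rfl⟩ := hy
  by_cases hvp : v = π p
  · exact hvp ▸ mem_image_of_mem π hpA
  · exact hA _ ⟨hΔ (erase_subset _ F) hF, notMem_erase _ F⟩ (mem_erase.2 ⟨hvp, hv⟩)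

theorem isFacet_expandComplex_iff (hΔ : IsLowerSet Δ) (hA : Covers π A Δ) {M : Finset α} :
    IsFacet (expandComplex π A Δ) M ↔
      M ∈ expandComplex π A Δ ∧ IsFacet Δ (M.image π) := by
  classical
  refine ⟨fun hM => ⟨hM.1, hM.1.2.2, fun J hJ hMJ => hMJ.antisymm fun v hvJ => ?_⟩,
    fun ⟨hM, hfac⟩ => ⟨hM, fun N hN hMN => hMN.antisymm fun q hq => ?_⟩⟩
  · by_contra hv
    obtain ⟨a, ha, rfl⟩ := mem_image.1 (hA J hJ hvJ)
    have hins : insert a M ∈ expandComplex π A Δ := by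
      refine ⟨insert_subset ha hM.1.1, ?_, ?_⟩
      · rw [coe_insert, Set.injOn_insert fun haM => hv (mem_image_of_mem π haM)]
        exact ⟨hM.1.2.1, by simpa using hv⟩
      · rw [image_insert]
        exact hΔ (insert_subset hvJ hMJ) hJ
    exact hv (mem_image_of_mem π (hM.2 _ hins (subset_insert a M) ▸ mem_insert_self a M))
  · have himg := hfac.2 _ hN.2.2 (image_subset_image hMN)
    obtain ⟨p, hp, hpq⟩ := mem_image.1 (himg ▸ mem_image_of_mem π hq)
    exact hN.2.1 (hMN hp) hq hpq ▸ hp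

theorem isPure_expandComplex (hΔ : IsLowerSet Δ) (hA : Covers π A Δ) (hp : IsPure Δ) :
    IsPure (expandComplex π A Δ) := by
  intro M N hM hN
  rw [isFacet_expandComplex_iff hΔ hA] at hM hN
  rw [← card_image_of_injOn hM.1.2.1, ← card_image_of_injOn hN.1.2.1]
  exact hp _ _ hM.2 hN.2

theorem expandComplex_del_of_forall_ne (hy : ∀ a ∈ A, π a ≠ y) :
    expandComplex π A (del Δ y) = expandComplex π A Δ := by
  ext F
  simp only [del, expandComplex, Set.mem_ofPred_eq]
  refine ⟨fun h => ⟨h.1, h.2.1, h.2.2.1⟩, fun h => ⟨h.1, h.2.1, h.2.2, fun hyF => ?_⟩⟩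
  obtain ⟨a, ha, hay⟩ := mem_image.1 hyF
  exact hy a (h.1 ha) hay

theorem isPure_expandComplex_of_covers_del (hΔ : IsLowerSet Δ) (hp : IsPure Δ)
    (hdp : IsPure (del Δ y)) (hA : Covers π A (del Δ y)) : IsPure (expandComplex π A Δ) := by
  by_cases hy : ∃ p ∈ A, π p = y
  · exact isPure_expandComplex hΔ (hA.of_del hΔ hy) hp
  · push Not at hy
    rw [← expandComplex_del_of_forall_ne hy]
    exact isPure_expandComplex (isLowerSet_del hΔ y) hA hdp

theorem expandComplex_Iic_empty : expandComplex π A (Set.Iic ∅) = Set.Iic ∅ := by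
  ext F
  simp only [expandComplex, Set.mem_ofPred_eq, Set.mem_Iic, subset_empty, image_eq_empty]
  exact ⟨fun h => h.2.2, by rintro rfl; simp⟩

variable [DecidableEq α]

theorem del_expandComplex (p : α) :
    del (expandComplex π A Δ) p = expandComplex π (A.erase p) Δ := by
  ext F
  simp only [del, expandComplex, Set.mem_ofPred_eq, subset_erase]
  tauto

theorem link_expandComplex {p : α} (hp : p ∈ A) :
    link (expandComplex π A Δ) p = expandComplex π A (link Δ (π p)) := by
  ext F
  simp only [link, expandComplex, Set.mem_ofPred_eq, image_insert, coe_insert]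
  constructor
  · rintro ⟨⟨hFA, hinj, hF⟩, hpF, -, hinj', hins⟩
    have hpF' : π p ∉ F.image π := by simpa using ((Set.injOn_insert hpF).1 hinj').2
    exact ⟨hFA, hinj, hF, hpF', hins⟩
  · rintro ⟨hFA, hinj, hF, hpF, hins⟩
    have hpF' : p ∉ F := fun h => hpF (mem_image_of_mem π h)
    refine ⟨⟨hFA, hinj, hF⟩, hpF', insert_subset hp hFA, ?_, hins⟩
    exact (Set.injOn_insert hpF').2 ⟨hinj, by simpa using hpF⟩

theorem Covers.erase (hA : Covers π A (del Δ y)) {p : α} (hp : π p = y) :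
    Covers π (A.erase p) (del Δ y) := by
  intro F hF v hv
  obtain ⟨a, ha, rfl⟩ := mem_image.1 (hA F hF hv)
  have hap : a ≠ p := by rintro rfl; exact hF.2 (hp ▸ hv)
  exact mem_image_of_mem π (mem_erase.2 ⟨hap, ha⟩)

end Expansion

section VertexDecomposable

variable {α : Type*} [DecidableEq α] [DecidableEq V] {π : α → V} {Δ : Set (Finset V)} {y : V}

theorem vertexDecomposable_expandComplex_of_vertex (hΔ : IsLowerSet Δ) (hp : IsPure Δ)
    (hdp : IsPure (del Δ y)) (hlp : IsPure (link Δ y))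
    (hd : ∀ A : Finset α, Covers π A (del Δ y) →
      VertexDecomposable (expandComplex π A (del Δ y)))
    (hl : ∀ A : Finset α, Covers π A (link Δ y) →
      VertexDecomposable (expandComplex π A (link Δ y)))
    (A : Finset α) (hA : Covers π A (del Δ y)) : VertexDecomposable (expandComplex π A Δ) := by
  induction A using strongInduction with
  | H A ih =>
    by_cases hy : ∃ p ∈ A, π p = y
    · obtain ⟨p, hpA, rfl⟩ := hy
      have hAl : Covers π A (link Δ (π p)) := hA.mono (link_subset_del _)
      have hA' : Covers π (A.erase p) (del Δ (π p)) := hA.erase rfl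
      refine .step _ p ?_ ?_ ?_ ?_
      · rw [del_expandComplex]
        exact isPure_expandComplex_of_covers_del hΔ hp hdp hA'
      · rw [link_expandComplex hpA]
        exact isPure_expandComplex (isLowerSet_link hΔ _) hAl hlp
      · rw [del_expandComplex]
        exact ih _ (erase_ssubset hpA) hA'
      · rw [link_expandComplex hpA]
        exact hl A hAl
    · push Not at hy
      rw [← expandComplex_del_of_forall_ne hy]
      exact hd A hA

theorem vertexDecomposable_expandComplex_Iic (F₀ : Finset V) (A : Finset α)
    (hA : Covers π A (Set.Iic F₀)) : VertexDecomposable (expandComplex π A (Set.Iic F₀)) := by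
  induction F₀ using Finset.induction_on generalizing A with
  | empty => rw [expandComplex_Iic_empty]; exact vertexDecomposable_Iic
  | insert y F hy ih =>
    refine vertexDecomposable_expandComplex_of_vertex (y := y) (isLowerSet_Iic _) isPure_Iic
      (by rw [del_Iic_insert hy]; exact isPure_Iic) (by rw [link_Iic_insert hy]; exact isPure_Iic)
      (by rw [del_Iic_insert hy]; exact ih) (by rw [link_Iic_insert hy]; exact ih) A ?_
    rw [del_Iic_insert hy]
    exact hA.mono (Set.Iic_subset_Iic.2 (subset_insert y F))

theorem VertexDecomposable.expandComplex [Finite V] (hvd : VertexDecomposable Δ)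
    (hΔ : IsLowerSet Δ) (hp : IsPure Δ) (A : Finset α) (hA : Covers π A Δ) :
    VertexDecomposable (expandComplex π A Δ) := by
  induction hvd generalizing A with
  | simplex Δ h =>
    obtain ⟨F₀, hF₀, huniq⟩ := h
    rw [eq_Iic_of_isFacet_unique hΔ hF₀ huniq] at hA ⊢
    exact vertexDecomposable_expandComplex_Iic F₀ A hA
  | step Δ y hdp hlp _ _ ihd ihl =>
    exact vertexDecomposable_expandComplex_of_vertex hΔ hp hdp hlp
      (ihd (isLowerSet_del hΔ y) hdp) (ihl (isLowerSet_link hΔ y) hlp) A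
      (hA.mono fun _ hF => hF.1)

end VertexDecomposable

section Shelling

variable [DecidableEq V] {β : Type*} [LinearOrder β]

/-- Listing the facets by increasing `κ` is a shelling order. -/
def IsShellingKey (Δ : Set (Finset V)) (κ : Finset V → β) : Prop :=
  (∀ F G, IsFacet Δ F → IsFacet Δ G → κ F = κ G → F = G) ∧
    ∀ F G, IsFacet Δ F → IsFacet Δ G → κ G < κ F →
      ∃ x ∈ F \ G, ∃ H, IsFacet Δ H ∧ κ H < κ F ∧ F \ H = {x}

variable {Δ : Set (Finset V)}

theorem Shellable.exists_isShellingKey (h : Shellable Δ) :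
    ∃ κ : Finset V → ℕ, IsShellingKey Δ κ := by
  classical
  obtain ⟨-, t, F, hfac, hsurj, hinj, hsh⟩ := h
  let κ : Finset V → ℕ := fun G => if h : ∃ i, F i = G then h.choose else 0
  have hκ (i : Fin t) : κ (F i) = i := by
    have h : ∃ j, F j = F i := ⟨i, rfl⟩
    simp only [κ, dif_pos h, hinj h.choose_spec]
  refine ⟨κ, fun G G' hG hG' he => ?_, fun G G' hG hG' hlt => ?_⟩
  · obtain ⟨i, rfl⟩ := hsurj G hG
    obtain ⟨j, rfl⟩ := hsurj G' hG'
    rw [hκ, hκ] at he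
    rw [Fin.ext he]
  · obtain ⟨i, rfl⟩ := hsurj G hG
    obtain ⟨j, rfl⟩ := hsurj G' hG'
    rw [hκ, hκ] at hlt
    obtain ⟨x, hx, k, hk, hdiff⟩ := hsh i j hlt
    exact ⟨x, hx, F k, hfac k, by rw [hκ, hκ]; exact hk, hdiff⟩

theorem shellable_of_isShellingKey [Finite V] {κ : Finset V → β} (hp : IsPure Δ)
    (h : IsShellingKey Δ κ) : Shellable Δ := by
  set K : Finset β := (Set.toFinite {F | IsFacet Δ F}).toFinset.image κ
  set e := K.orderEmbOfFin rfl
  have hK (i : Fin K.card) : ∃ F, IsFacet Δ F ∧ κ F = e i := by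
    have hi : e i ∈ K := K.orderEmbOfFin_mem rfl i
    simpa [K] using hi
  choose F hF hκF using hK
  have hsurj (G : Finset V) (hG : IsFacet Δ G) : ∃ i, F i = G := by
    have hGK : κ G ∈ Set.range e := by
      rw [range_orderEmbOfFin]
      simpa [K] using ⟨G, hG, rfl⟩
    obtain ⟨i, hi⟩ := hGK
    exact ⟨i, h.1 _ _ (hF i) hG (by rw [hκF, hi])⟩
  refine ⟨hp, K.card, F, hF, hsurj, fun i j hij => e.injective (by rw [← hκF, ← hκF, hij]), ?_⟩
  intro i j hji
  obtain ⟨x, hx, H, hH, hlt, hdiff⟩ :=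
    h.2 _ _ (hF i) (hF j) (by rw [hκF, hκF]; exact e.strictMono hji)
  obtain ⟨k, rfl⟩ := hsurj H hH
  exact ⟨x, hx, k, e.lt_iff_lt.1 (by rw [← hκF, ← hκF]; exact hlt), hdiff⟩

end Shelling

section ShellingExpansion

variable {α : Type*} [DecidableEq V] {π : α → V} {A : Finset α}
  {Δ : Set (Finset V)} {β : Type*} [LinearOrder β] {κ : Finset V → β}

theorem exists_mem_expandComplex_image_eq [DecidableEq α] (hA : Covers π A Δ) {M : Finset α}
    (hM : M ∈ expandComplex π A Δ) {H : Finset V} (hH : H ∈ Δ) :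
    ∃ M' ∈ expandComplex π A Δ, M'.image π = H ∧ ∀ q ∈ M, π q ∈ H → q ∈ M' := by
  obtain ⟨L, hLA, hLinj, hLH⟩ := exists_lift_of_subset_image (hA H hH)
  set M' := M.filter (π · ∈ H) ∪ L.filter (π · ∉ M.image π)
  have hM'img : M'.image π = H := by
    ext v
    simp only [M', ← hLH, image_union, mem_union, mem_image, mem_filter]
    grind
  refine ⟨M', ⟨union_subset ((filter_subset _ _).trans hM.1) ((filter_subset _ _).trans hLA),
    ?_, hM'img ▸ hH⟩, hM'img, fun q hq hqH => mem_union_left _ (mem_filter.2 ⟨hq, hqH⟩)⟩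
  rw [coe_union, Set.injOn_union]
  · refine ⟨hM.2.1.mono (coe_subset.2 (filter_subset _ _)),
      hLinj.mono (coe_subset.2 (filter_subset _ _)), fun a ha b hb hab => ?_⟩
    simp only [coe_filter, Set.mem_ofPred_eq] at ha hb
    exact hb.2 (hab ▸ mem_image_of_mem π ha.1)
  · rw [disjoint_coe, disjoint_left]
    intro a ha hb
    exact (mem_filter.1 hb).2 (mem_image_of_mem π (mem_filter.1 ha).1)

/-- Facets over different facets of `Δ`: the vertex `x` that the shelling of `Δ` exchanges is
exchanged together with its copy, keeping the copies chosen over the other vertices. -/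
theorem exists_exchange_expandComplex_of_key_lt [DecidableEq α] (hΔ : IsLowerSet Δ)
    (hA : Covers π A Δ) (h : IsShellingKey Δ κ) {M N : Finset α}
    (hM : IsFacet (expandComplex π A Δ) M) (hN : IsFacet (expandComplex π A Δ) N)
    (hlt : κ (N.image π) < κ (M.image π)) :
    ∃ p ∈ M \ N, ∃ M', IsFacet (expandComplex π A Δ) M' ∧
      κ (M'.image π) < κ (M.image π) ∧ M \ M' = {p} := by
  rw [isFacet_expandComplex_iff hΔ hA] at hM hN
  obtain ⟨x, hx, H, hH, hHlt, hdiff⟩ := h.2 _ _ hM.2 hN.2 hlt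
  obtain ⟨hxM, hxN⟩ := mem_sdiff.1 hx
  obtain ⟨p, hpM, rfl⟩ := mem_image.1 hxM
  have hpH : π p ∉ H := (mem_sdiff.1 (hdiff ▸ mem_singleton_self (π p))).2
  obtain ⟨M', hM', hM'img, hMM'⟩ := exists_mem_expandComplex_image_eq hA hM.1 hH.1
  refine ⟨p, mem_sdiff.2 ⟨hpM, fun hpN => hxN (mem_image_of_mem π hpN)⟩, M',
    (isFacet_expandComplex_iff hΔ hA).2 ⟨hM', hM'img ▸ hH⟩, hM'img ▸ hHlt, ?_⟩
  ext q
  rw [mem_sdiff, mem_singleton]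
  constructor
  · rintro ⟨hqM, hqM'⟩
    have hqH : π q ∈ M.image π \ H :=
      mem_sdiff.2 ⟨mem_image_of_mem π hqM, fun h => hqM' (hMM' q hqM h)⟩
    rw [hdiff, mem_singleton] at hqH
    exact hM.1.2.1 hqM hpM hqH
  · rintro rfl
    exact ⟨hpM, fun hpM' => hpH (hM'img ▸ mem_image_of_mem π hpM')⟩

/-- Facets over the same facet of `Δ`: the largest copy `w` where `M` and `N` differ is traded for
the smaller copy of the same vertex chosen by `N`. -/
theorem exists_exchange_expandComplex_of_image_eq [LinearOrder α] {M N : Finset α}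
    (hM : M ∈ expandComplex π A Δ) (hN : N ∈ expandComplex π A Δ)
    (himg : N.image π = M.image π) (hlt : toColex N < toColex M) :
    ∃ w ∈ M \ N, ∃ M' ∈ expandComplex π A Δ, M'.image π = M.image π ∧
      toColex M' < toColex M ∧ M \ M' = {w} := by
  obtain ⟨w, hwM, hwN, hmax⟩ := Finset.Colex.toColex_lt_toColex_iff_exists_forall_lt.1 hlt
  obtain ⟨q, hqN, hq⟩ := mem_image.1 (himg ▸ mem_image_of_mem π hwM)
  have hqw : q ≠ w := by rintro rfl; exact hwN hqN
  have hqM : q ∉ M := fun hqM => hqw (hM.2.1 hqM hwM hq)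
  have hqlt : q < w := hmax q hqN hqM
  have hq' : q ∉ M.erase w := fun h => hqM (mem_of_mem_erase h)
  have himg' : (insert q (M.erase w)).image π = M.image π := by
    conv_rhs => rw [← insert_erase hwM]
    rw [image_insert, image_insert, hq]
  refine ⟨w, mem_sdiff.2 ⟨hwM, hwN⟩, insert q (M.erase w), ⟨?_, ?_, himg' ▸ hM.2.2⟩,
    himg', ?_, ?_⟩
  · exact insert_subset (hN.1 hqN) ((erase_subset w M).trans hM.1)
  · rw [coe_insert, Set.injOn_insert hq']
    refine ⟨hM.2.1.mono (coe_subset.2 (erase_subset w M)), ?_⟩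
    rintro ⟨a, ha, hqa⟩
    have ha' := mem_erase.1 ha
    exact ha'.1 (hM.2.1 ha'.2 hwM (hqa.trans hq))
  · refine Finset.Colex.toColex_lt_toColex_iff_exists_forall_lt.2
      ⟨w, hwM, by simp [hqw.symm], fun b hb hbM => ?_⟩
    rcases mem_insert.1 hb with rfl | hb
    · exact hqlt
    · exact absurd (mem_of_mem_erase hb) hbM
  · ext b
    simp only [mem_sdiff, mem_insert, mem_erase, mem_singleton]
    constructor
    · rintro ⟨hbM, hb⟩
      by_contra hbw
      exact hb (Or.inr ⟨hbw, hbM⟩)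
    · rintro rfl
      refine ⟨hwM, ?_⟩
      rintro (h | h)
      exacts [hqw h.symm, h.1 rfl]

theorem IsShellingKey.expandComplex [LinearOrder α] (hΔ : IsLowerSet Δ) (hA : Covers π A Δ)
    (h : IsShellingKey Δ κ) :
    IsShellingKey (expandComplex π A Δ) fun M => toLex (κ (M.image π), toColex M) := by
  refine ⟨fun M N _ _ he => toColex.injective (congrArg (fun x => (ofLex x).2) he),
    fun M N hM hN hlt => ?_⟩
  rcases Prod.Lex.toLex_lt_toLex.1 hlt with hlt | ⟨heq, hlt⟩
  · obtain ⟨p, hp, M', hM', hM'lt, hdiff⟩ :=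
      exists_exchange_expandComplex_of_key_lt hΔ hA h hM hN hlt
    exact ⟨p, hp, M', hM', Prod.Lex.toLex_lt_toLex.2 (Or.inl hM'lt), hdiff⟩
  · rw [isFacet_expandComplex_iff hΔ hA] at hM hN
    obtain ⟨w, hw, M', hM', hM'img, hM'lt, hdiff⟩ :=
      exists_exchange_expandComplex_of_image_eq hM.1 hN.1 (h.1 _ _ hN.2 hM.2 heq) hlt
    refine ⟨w, hw, M', (isFacet_expandComplex_iff hΔ hA).2 ⟨hM', hM'img ▸ hM.2⟩,
      Prod.Lex.toLex_lt_toLex.2 (Or.inr ⟨by rw [hM'img], hM'lt⟩), hdiff⟩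

theorem Shellable.expandComplex [Finite α] [LinearOrder α] (hsh : Shellable Δ)
    (hΔ : IsLowerSet Δ) (hA : Covers π A Δ) : Shellable (expandComplex π A Δ) := by
  obtain ⟨κ, hκ⟩ := hsh.exists_isShellingKey
  exact shellable_of_isShellingKey (isPure_expandComplex hΔ hA hsh.1) (hκ.expandComplex hΔ hA)

end ShellingExpansion

section Graphs

theorem isLowerSet_indComplex (G : SimpleGraph V) : IsLowerSet (indComplex G) :=
  fun _ _ hGF hF v hv w hw => hF v (hGF hv) w (hGF hw)

theorem indComplex_eq_expandComplex {α : Type*} [Fintype α] [DecidableEq V]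
    {H : SimpleGraph α} {G : SimpleGraph V} (π : α → V)
    (hadj : ∀ u v, H.Adj u v ↔ G.Adj (π u) (π v) ∨ (u ≠ v ∧ π u = π v)) :
    indComplex H = expandComplex π univ (indComplex G) := by
  ext F
  simp only [indComplex, expandComplex, Set.mem_ofPred_eq, subset_univ, true_and,
    mem_image, forall_exists_index, and_imp, forall_apply_eq_imp_iff₂, hadj, not_or,
    not_and]
  exact ⟨fun h => ⟨fun u hu v hv huv => not_not.1 fun hne => (h u hu v hv).2 hne huv,
    fun u hu v hv => (h u hu v hv).1⟩,
    fun h u hu v hv => ⟨h.2 u hu v hv, fun hne huv => hne (h.1 hu hv huv)⟩⟩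

theorem covers_univ_of_surjective {α : Type*} [Fintype α] [DecidableEq V] {π : α → V}
    (hπ : Function.Surjective π) (Δ : Set (Finset V)) : Covers π univ Δ := by
  intro F _ v _
  obtain ⟨a, rfl⟩ := hπ v
  exact mem_image_of_mem π (mem_univ a)

theorem Fin.val_sub_eq_zero_iff {N : ℕ} {a b : Fin N} : ((a - b : Fin N) : ℕ) = 0 ↔ a = b := by
  rw [Fin.ext_iff]
  rcases le_or_gt b a with h | h
  · rw [Fin.coe_sub_iff_le.2 h]
    have := Fin.le_def.1 h
    omega
  · rw [Fin.coe_sub_iff_lt.2 h]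
    have := Fin.lt_def.1 h
    omega

theorem circulant_adj_iff {N : ℕ} {S : Set ℕ} {a b : Fin N} :
    (circulant N S).Adj a b ↔ a ≠ b ∧ (((a - b : Fin N) : ℕ) ∈ S ∨ N - (a - b : Fin N) ∈ S) := by
  simp only [circulant]
  refine and_congr_right fun _ => ?_
  rcases le_or_gt b a with hba | hab
  · rw [Fin.coe_sub_iff_le.2 hba, max_eq_left (Fin.le_def.1 hba),
      min_eq_right (Fin.le_def.1 hba)]
  · rw [Fin.coe_sub_iff_lt.2 hab, max_eq_right (Fin.lt_def.1 hab).le,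
      min_eq_left (Fin.lt_def.1 hab).le,
      show N - (N + ↑a - ↑b) = ↑b - ↑a by omega, show N + ↑a - ↑b = N - (↑b - ↑a) by omega]
    exact or_comm

end Graphs

section LexCirculant

/-- `(a, j) ↦ a + n * j`. -/
def digitEquiv (n m : ℕ) : Fin n × Fin m ≃ Fin (n * m) :=
  (Equiv.prodComm _ _).trans (finProdFinEquiv.trans (finCongr (Nat.mul_comm m n)))

def residue (n m : ℕ) (u : Fin (n * m)) : Fin n :=
  ((digitEquiv n m).symm u).1

theorem val_residue {n m : ℕ} (u : Fin (n * m)) : (residue n m u : ℕ) = u % n :=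
  rfl

theorem residue_digitEquiv {n m : ℕ} (x : Fin n × Fin m) :
    residue n m (digitEquiv n m x) = x.1 := by
  simp [residue]

theorem surjective_residue {n m : ℕ} (hm : 0 < m) : Function.Surjective (residue n m) :=
  fun a => ⟨digitEquiv n m (a, ⟨0, hm⟩), residue_digitEquiv _⟩

theorem mul_sub_mod_eq_sub_mod {n d k : ℕ} (hn : 0 < n) (hd : d ≤ n * k) :
    (n * k - d) % n = (n - d % n) % n := by
  rw [← ZMod.natCast_eq_natCast_iff', Nat.cast_sub hd, Nat.cast_sub (Nat.mod_lt d hn).le]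
  simp

theorem residue_sub {n m : ℕ} (u v : Fin (n * m)) :
    residue n m (u - v) = residue n m u - residue n m v := by
  have hn : 0 < n := Nat.pos_of_mul_pos_right (Nat.zero_lt_of_lt u.2)
  ext
  simp only [val_residue, Fin.val_sub]
  rw [Nat.mod_mod_of_dvd _ (Nat.dvd_mul_right n m), ← ZMod.natCast_eq_natCast_iff',
    Nat.cast_add, Nat.cast_add, Nat.cast_sub v.2.le, Nat.cast_sub (Nat.mod_lt _ hn).le]
  simp

/-- The connection set of `C_n(S₁)[K_m]` as a circulant graph on `ℤ/nm`: the differences whose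
residue mod `n` is `0` (same vertex of `C_n(S₁)`) or a difference of `C_n(S₁)`. -/
def lexConnectionSet (n m : ℕ) (S₁ : Set ℕ) : Set ℕ :=
  {d | d ∈ Set.Icc 1 (n * m / 2) ∧ (d % n = 0 ∨ d % n ∈ S₁ ∨ n - d % n ∈ S₁)}

theorem lexConnectionSet_subset (n m : ℕ) (S₁ : Set ℕ) :
    lexConnectionSet n m S₁ ⊆ Set.Icc 1 (n * m / 2) :=
  fun _ hd => hd.1

theorem mem_or_sub_mem_lexConnectionSet {n m d : ℕ} {S₁ : Set ℕ} (hd0 : 0 < d)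
    (hd : d < n * m) :
    d ∈ lexConnectionSet n m S₁ ∨ n * m - d ∈ lexConnectionSet n m S₁ ↔
      d % n = 0 ∨ d % n ∈ S₁ ∨ n - d % n ∈ S₁ := by
  have hn : 0 < n := Nat.pos_of_mul_pos_right (hd0.trans hd)
  have hsymm : ((n * m - d) % n = 0 ∨ (n * m - d) % n ∈ S₁ ∨ n - (n * m - d) % n ∈ S₁) ↔
      (d % n = 0 ∨ d % n ∈ S₁ ∨ n - d % n ∈ S₁) := by
    rw [mul_sub_mod_eq_sub_mod hn hd.le]
    rcases Nat.eq_zero_or_pos (d % n) with h0 | hpos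
    · simp [h0]
    · rw [Nat.mod_eq_of_lt (Nat.sub_lt hn hpos), Nat.sub_sub_self (Nat.mod_lt d hn).le]
      have : n - d % n ≠ 0 := by have := Nat.mod_lt d hn; omega
      simp only [this, hpos.ne', false_or]
      exact or_comm
  have hsub : n * m - d ∈ lexConnectionSet n m S₁ ↔
      n * m - d ∈ Set.Icc 1 (n * m / 2) ∧ (d % n = 0 ∨ d % n ∈ S₁ ∨ n - d % n ∈ S₁) :=
    and_congr_right' hsymm
  rw [hsub]
  refine ⟨fun h => h.elim And.right And.right, fun h => ?_⟩
  rcases le_or_gt d (n * m / 2) with hle | hlt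
  exacts [Or.inl ⟨⟨hd0, hle⟩, h⟩, Or.inr ⟨⟨by omega, by omega⟩, h⟩]

theorem circulant_lexConnectionSet_adj_iff {n m : ℕ} {S₁ : Set ℕ} {u v : Fin (n * m)} :
    (circulant (n * m) (lexConnectionSet n m S₁)).Adj u v ↔
      (circulant n S₁).Adj (residue n m u) (residue n m v) ∨
        (u ≠ v ∧ residue n m u = residue n m v) := by
  by_cases huv : u = v
  · subst huv
    simp only [SimpleGraph.irrefl, ne_eq, not_true_eq_false, false_and, or_false]
  have hd0 : 0 < ((u - v : Fin (n * m)) : ℕ) :=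
    Nat.pos_of_ne_zero (mt Fin.val_sub_eq_zero_iff.1 huv)
  rw [circulant_adj_iff, circulant_adj_iff, mem_or_sub_mem_lexConnectionSet hd0 (u - v).2,
    ← val_residue, residue_sub]
  simp only [ne_eq, ← Fin.val_sub_eq_zero_iff (a := residue n m u)]
  tauto

def lexProdCirculantIso (n m : ℕ) (S₁ : Set ℕ) :
    lexProd (circulant n S₁) (⊤ : SimpleGraph (Fin m)) ≃g
      circulant (n * m) (lexConnectionSet n m S₁) where
  toEquiv := digitEquiv n m
  map_rel_iff' {x y} := by
    rw [circulant_lexConnectionSet_adj_iff, residue_digitEquiv, residue_digitEquiv,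
      (digitEquiv n m).injective.ne_iff]
    simp only [lexProd, SimpleGraph.top_adj, ne_eq, Prod.ext_iff]
    tauto

end LexCirculant

theorem stmt17_general (n : ℕ) (S₁ : Set ℕ) (m : ℕ) (hm : 1 ≤ m) :
    (Shellable (indComplex (circulant n S₁)) →
      ∃ S : Set ℕ, S ⊆ Set.Icc 1 (n * m / 2) ∧
        Nonempty (lexProd (circulant n S₁) (⊤ : SimpleGraph (Fin m)) ≃g
          circulant (n * m) S) ∧
        Shellable (indComplex (circulant (n * m) S))) ∧
    ((IsPure (indComplex (circulant n S₁)) ∧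
        VertexDecomposable (indComplex (circulant n S₁))) →
      ∃ S : Set ℕ, S ⊆ Set.Icc 1 (n * m / 2) ∧
        Nonempty (lexProd (circulant n S₁) (⊤ : SimpleGraph (Fin m)) ≃g
          circulant (n * m) S) ∧
        IsPure (indComplex (circulant (n * m) S)) ∧
        VertexDecomposable (indComplex (circulant (n * m) S))) := by
  have hΔ := isLowerSet_indComplex (circulant n S₁)
  have hcov := covers_univ_of_surjective (surjective_residue hm) (indComplex (circulant n S₁))
  have hind : indComplex (circulant (n * m) (lexConnectionSet n m S₁)) =
      expandComplex (residue n m) univ (indComplex (circulant n S₁)) :=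
    indComplex_eq_expandComplex _ fun _ _ => circulant_lexConnectionSet_adj_iff
  refine ⟨fun hsh => ⟨_, lexConnectionSet_subset n m S₁, ⟨lexProdCirculantIso n m S₁⟩, ?_⟩,
    fun ⟨hp, hvd⟩ => ⟨_, lexConnectionSet_subset n m S₁, ⟨lexProdCirculantIso n m S₁⟩, ?_, ?_⟩⟩
  · rw [hind]
    exact hsh.expandComplex hΔ hcov
  · rw [hind]
    exact isPure_expandComplex hΔ hcov hp
  · rw [hind]
    exact hvd.expandComplex hΔ hp _ hcov

theorem stmt17 (n : ℕ) (hn : 1 ≤ n) (S₁ : Set ℕ) (hS₁ : S₁ ⊆ Set.Icc 1 (n / 2))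
    (m : ℕ) (hm : 1 ≤ m) :
    (Shellable (indComplex (circulant n S₁)) →
      ∃ S : Set ℕ, S ⊆ Set.Icc 1 (n * m / 2) ∧
        Nonempty (lexProd (circulant n S₁) (⊤ : SimpleGraph (Fin m)) ≃g
          circulant (n * m) S) ∧
        Shellable (indComplex (circulant (n * m) S))) ∧
    ((IsPure (indComplex (circulant n S₁)) ∧
        VertexDecomposable (indComplex (circulant n S₁))) →
      ∃ S : Set ℕ, S ⊆ Set.Icc 1 (n * m / 2) ∧
        Nonempty (lexProd (circulant n S₁) (⊤ : SimpleGraph (Fin m)) ≃g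
          circulant (n * m) S) ∧
        IsPure (indComplex (circulant (n * m) S)) ∧
        VertexDecomposable (indComplex (circulant (n * m) S))) :=
  stmt17_general n S₁ m hm
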